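/- arXiv:2009.00296 — 2 statements merged into one kernel-verified Lean document; each statement's English description precedes it below -/
import Mathlib

section
/- Let ν, ω, σ, e and the constraint functions G^j be as defined in the context, and let m_x > 0 and m_W > 0 be real numbers. Fix τ ∈ [0,∞), ξ ∈ ℝ^ν, and a strictly lower triangular ν×ν real matrix W, and define the ν×ν matrix Λ by Λ_{ij} := (1/m_x) Σ_{a=0}^{ν−1} (∂G^i/∂ξ^a)(∂G^j/∂ξ^a) + (1/m_W) Σ_{a,b=0}^{ν−1} (∂G^i/∂m_{ab})(∂G^j/∂m_{ab}), where all partial derivatives are evaluated at (τ, ξ, W). Then Λ is symmetric positive definite; in particular, for every right-hand side r ∈ ℝ^ν the linear system Λ λ = r determining the Lagrange multipliers has a unique solution λ ∈ ℝ^ν. -/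
/-- The constraint function `G^j(τ, ξ, M)` of the neural network:
`ξ^j − e^j(τ)` for input units (`j < ω`) and `ξ^j − σ(Σ_k m_{jk} ξ^k)`
for the remaining units. -/
noncomputable def G (ν ω : ℕ) (σ : ℝ → ℝ) (e : ℝ → Fin ω → ℝ)
    (τ : ℝ) (ξ : Fin ν → ℝ) (M : Fin ν → Fin ν → ℝ) (j : Fin ν) : ℝ :=
  if h : (j : ℕ) < ω then ξ j - e τ ⟨(j : ℕ), h⟩
  else ξ j - σ (∑ k, M j k * ξ k)

/-! The multiplier matrix is a sum of Gram matrices, `Λ = m_x⁻¹ • J Jᵀ + m_W⁻¹ • K Kᵀ`, of the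
Jacobians `J` and `K` of the constraints with respect to `ξ` and to the weights. Because `W` is
strictly lower triangular (a feed-forward network), `∂G^j/∂ξ^a` vanishes for `j < a` and equals `1`
for `j = a`, so `J` is unit lower triangular, hence invertible, and `J Jᵀ` is positive definite. -/

open Matrix

theorem Matrix.PosDef.existsUnique_mulVec_eq {n K : Type*} [Fintype n] [DecidableEq n] [Field K]
    [PartialOrder K] [StarRing K] {M : Matrix n n K} (hM : M.PosDef) (r : n → K) :
    ∃! x, M *ᵥ x = r :=
  Function.Bijective.existsUnique
    ⟨mulVec_injective_iff_isUnit.2 hM.isUnit, mulVec_surjective_iff_isUnit.2 hM.isUnit⟩ r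

theorem Matrix.posDef_smul_mul_transpose_add_smul_mul_transpose {m n : Type*} [Fintype m]
    [DecidableEq m] [Fintype n] {A : Matrix m m ℝ} (hA : IsUnit A) (B : Matrix m n ℝ)
    {a b : ℝ} (ha : 0 < a) (hb : 0 ≤ b) :
    (a • (A * Aᵀ) + b • (B * Bᵀ)).PosDef := by
  simp only [← conjTranspose_eq_transpose_of_trivial]
  have hAA : (A * Aᴴ).PosDef := .mul_conjTranspose_self A (vecMul_injective_iff_isUnit.2 hA)
  exact (hAA.smul ha).add_posSemidef ((posSemidef_self_mul_conjTranspose B).smul hb)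

section Constraint

variable {ν ω : ℕ} {σ : ℝ → ℝ} {e : ℝ → Fin ω → ℝ} {τ : ℝ} {M : Fin ν → Fin ν → ℝ}

theorem fderiv_G_xi_apply_single (hσ : Differentiable ℝ σ) (ξ : Fin ν → ℝ) (j a : Fin ν) :
    fderiv ℝ (fun ξ' => G ν ω σ e τ ξ' M j) ξ (Pi.single a 1) =
      (Pi.single a 1 : Fin ν → ℝ) j
        - if (j : ℕ) < ω then 0 else deriv σ (∑ k, M j k * ξ k) * M j a := by
  by_cases hj : (j : ℕ) < ω
  · have h := (hasFDerivAt_apply (𝕜 := ℝ) (F' := fun _ => ℝ) j ξ).sub_const (e τ ⟨j, hj⟩)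
    simp [G, hj, h.fderiv, Pi.single_apply]
  · have hlin : HasFDerivAt (fun ξ' : Fin ν → ℝ => ∑ k, M j k * ξ' k)
        (∑ k, M j k • ContinuousLinearMap.proj k) ξ :=
      .fun_sum fun k _ => (hasFDerivAt_apply (𝕜 := ℝ) (F' := fun _ => ℝ) k ξ).const_mul (M j k)
    have h : HasFDerivAt (fun ξ' : Fin ν → ℝ => ξ' j - σ (∑ k, M j k * ξ' k))
        (ContinuousLinearMap.proj j
          - deriv σ (∑ k, M j k * ξ k) • ∑ k, M j k • ContinuousLinearMap.proj k) ξ :=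
      (hasFDerivAt_apply (𝕜 := ℝ) (F' := fun _ => ℝ) j ξ).sub
        ((hσ _).hasDerivAt.comp_hasFDerivAt ξ hlin)
    simp [G, hj, h.fderiv, Pi.single_apply]

variable (ν ω σ e τ) in
noncomputable def jacobianXi (ξ : Fin ν → ℝ) (M : Fin ν → Fin ν → ℝ) : Matrix (Fin ν) (Fin ν) ℝ :=
  of fun j a => fderiv ℝ (fun ξ' => G ν ω σ e τ ξ' M j) ξ (Pi.single a 1)

theorem det_jacobianXi (hσ : Differentiable ℝ σ) (ξ : Fin ν → ℝ)
    (hM : ∀ i j, i ≤ j → M i j = 0) : (jacobianXi ν ω σ e τ ξ M).det = 1 := by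
  have hlower : (jacobianXi ν ω σ e τ ξ M).IsLowerTriangular := fun j a hja => by
    have hja : j < a := OrderDual.toDual_lt_toDual.1 hja
    simp [jacobianXi, fderiv_G_xi_apply_single hσ, hM j a hja.le, Pi.single_apply, hja.ne]
  rw [det_of_isLowerTriangular _ hlower]
  simp [jacobianXi, fderiv_G_xi_apply_single hσ, hM _ _ le_rfl]

end Constraint

theorem multiplier_system_posdef_general
    (ν ω : ℕ)
    (σ : ℝ → ℝ) (hσ : ContDiff ℝ 2 σ)
    (e : ℝ → Fin ω → ℝ)
    (m_x m_W : ℝ) (hmx : 0 < m_x) (hmW : 0 < m_W)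
    (τ : ℝ) (ξ : Fin ν → ℝ) (W : Fin ν → Fin ν → ℝ)
    (hW : ∀ i j : Fin ν, i ≤ j → W i j = 0) :
    let Gxi : Fin ν → Fin ν → ℝ := fun a i =>
      fderiv ℝ (fun ξ' => G ν ω σ e τ ξ' W i) ξ (Pi.single a 1)
    let GM : Fin ν → Fin ν → Fin ν → ℝ := fun a b i =>
      fderiv ℝ (fun M' => G ν ω σ e τ ξ M' i) W (Pi.single a (Pi.single b 1))
    let Λ : Matrix (Fin ν) (Fin ν) ℝ := Matrix.of fun i j =>
      (1 / m_x) * ∑ a, Gxi a i * Gxi a j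
        + (1 / m_W) * ∑ a, ∑ b, GM a b i * GM a b j
    Λ.IsSymm ∧ Λ.PosDef ∧ ∀ r : Fin ν → ℝ, ∃! l : Fin ν → ℝ, Λ.mulVec l = r := by
  intro Gxi GM Λ
  let J := jacobianXi ν ω σ e τ ξ W
  let K : Matrix (Fin ν) (Fin ν × Fin ν) ℝ := of fun i p => GM p.1 p.2 i
  have hΛ : Λ = (1 / m_x) • (J * Jᵀ) + (1 / m_W) • (K * Kᵀ) := by
    ext i j
    simp [Λ, J, K, jacobianXi, mul_apply, Fintype.sum_prod_type, Gxi]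
  have hJ : IsUnit J := (isUnit_iff_isUnit_det J).2 <| by
    rw [det_jacobianXi (hσ.differentiable two_ne_zero) ξ hW]; exact isUnit_one
  have hpos : Λ.PosDef := hΛ ▸
    posDef_smul_mul_transpose_add_smul_mul_transpose hJ K (by positivity) (by positivity)
  exact ⟨isHermitian_iff_isSymm.1 hpos.1, hpos, hpos.existsUnique_mulVec_eq⟩

/-- the matrix
`Λ_{ij} = (1/m_x) Σ_a G^i_{ξ^a} G^j_{ξ^a} + (1/m_W) Σ_{a,b} G^i_{m_{ab}} G^j_{m_{ab}}`
of the linear system for the Lagrange multipliers is symmetric positive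
definite; in particular `Λ λ = r` has a unique solution for every `r`. -/
theorem multiplier_system_posdef
    (ν ω : ℕ) (hω : 0 < ω) (hων : ω ≤ ν)
    (σ : ℝ → ℝ) (hσ : ContDiff ℝ 2 σ)
    (e : ℝ → Fin ω → ℝ) (he : ContDiffOn ℝ 1 e (Set.Ici 0))
    (m_x m_W : ℝ) (hmx : 0 < m_x) (hmW : 0 < m_W)
    (τ : ℝ) (hτ : 0 ≤ τ) (ξ : Fin ν → ℝ) (W : Fin ν → Fin ν → ℝ)
    (hW : ∀ i j : Fin ν, i ≤ j → W i j = 0) :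
    let Gxi : Fin ν → Fin ν → ℝ := fun a i =>
      fderiv ℝ (fun ξ' => G ν ω σ e τ ξ' W i) ξ (Pi.single a 1)
    let GM : Fin ν → Fin ν → Fin ν → ℝ := fun a b i =>
      fderiv ℝ (fun M' => G ν ω σ e τ ξ M' i) W (Pi.single a (Pi.single b 1))
    let Λ : Matrix (Fin ν) (Fin ν) ℝ := Matrix.of fun i j =>
      (1 / m_x) * ∑ a, Gxi a i * Gxi a j
        + (1 / m_W) * ∑ a, ∑ b, GM a b i * GM a b j
    Λ.IsSymm ∧ Λ.PosDef ∧ ∀ r : Fin ν → ℝ, ∃! l : Fin ν → ℝ, Λ.mulVec l = r :=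
  multiplier_system_posdef_general ν ω σ hσ e m_x m_W hmx hmW τ ξ W hW
end

section
/- Let ν, ω, σ, e and the constraint functions G^j be as defined in the context. Fix τ ∈ [0,∞), ξ ∈ ℝ^ν, a strictly lower triangular ν×ν real matrix W, a vector v ∈ ℝ^ν, and let T be the ν×ν matrix with T_{ij} := ∂G^j/∂ξ^i (τ, ξ, W). Then there is a unique δ ∈ ℝ^ν with T δ = −v, and it satisfies the backward recursion δ_i = −v_i + Σ_{j : ω ≤ j < ν} σ'(Σ_k w_{jk} ξ^k) · w_{ji} · δ_j for every i; in particular, if v_i = 0 then δ_i = Σ_{j : ω ≤ j < ν} σ'(Σ_k w_{jk} ξ^k) · w_{ji} · δ_j, and if w_{ji} = 0 for all j (an output unit) then δ_i = −v_i. -/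
/-! Because `W` is strictly lower triangular, only later units feed on earlier ones, so the
Jacobian `T = 1 - Dᵀ` (with `D_{ji} = σ'(Σ_k w_{jk} ξ^k) w_{ji}` for hidden units `j`) is upper
triangular with unit diagonal. Hence `det T = 1`, `T δ = -v` is uniquely solvable, and reading
off its `i`-th row gives the backward recursion. -/

open Matrix

namespace Matrix

variable {m R : Type*} [Fintype m] [DecidableEq m] [CommRing R]

theorem existsUnique_mulVec_eq {A : Matrix m m R} (hA : IsUnit A) (b : m → R) :
    ∃! x, A *ᵥ x = b :=
  Function.Bijective.existsUnique
    ⟨mulVec_injective_of_isUnit hA, mulVec_surjective_iff_isUnit.2 hA⟩ b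

theorem isUnit_of_isUpperTriangular_of_diag_eq_one [LinearOrder m] {A : Matrix m m R}
    (hA : A.IsUpperTriangular) (hdiag : ∀ i, A i i = 1) : IsUnit A := by
  rw [isUnit_iff_isUnit_det, det_of_isUpperTriangular hA]
  simp [hdiag]

end Matrix

theorem hasFDerivAt_sum_mul {ι : Type*} [Fintype ι] (w x : ι → ℝ) :
    HasFDerivAt (fun y : ι → ℝ => ∑ k, w k * y k)
      (∑ k, w k • (ContinuousLinearMap.proj k : (ι → ℝ) →L[ℝ] ℝ)) x :=
  HasFDerivAt.fun_sum fun k _ => (hasFDerivAt_apply k x).const_mul (w k)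

noncomputable def constraintJacobian (ν ω : ℕ) (σ : ℝ → ℝ) (e : ℝ → Fin ω → ℝ) (τ : ℝ)
    (ξ : Fin ν → ℝ) (M : Fin ν → Fin ν → ℝ) : Matrix (Fin ν) (Fin ν) ℝ :=
  Matrix.of fun i j => fderiv ℝ (fun ξ' => G ν ω σ e τ ξ' M j) ξ (Pi.single i 1)

section Jacobian

variable {ν ω : ℕ} {σ : ℝ → ℝ} (e : ℝ → Fin ω → ℝ) (τ : ℝ) (ξ : Fin ν → ℝ)
  (M : Fin ν → Fin ν → ℝ)

theorem hasFDerivAt_G_of_lt {j : Fin ν} (hj : (j : ℕ) < ω) :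
    HasFDerivAt (fun ξ' => G ν ω σ e τ ξ' M j)
      (ContinuousLinearMap.proj j : (Fin ν → ℝ) →L[ℝ] ℝ) ξ := by
  simp only [G, hj, dite_true]
  exact (hasFDerivAt_apply j ξ).sub_const _

theorem hasFDerivAt_G_of_le (hσ : Differentiable ℝ σ) {j : Fin ν} (hj : ω ≤ (j : ℕ)) :
    HasFDerivAt (fun ξ' => G ν ω σ e τ ξ' M j)
      ((ContinuousLinearMap.proj j : (Fin ν → ℝ) →L[ℝ] ℝ) -
        deriv σ (∑ k, M j k * ξ k) •
          ∑ k, M j k • (ContinuousLinearMap.proj k : (Fin ν → ℝ) →L[ℝ] ℝ)) ξ := by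
  simp only [G, hj.not_gt, dite_false]
  exact (hasFDerivAt_apply j ξ).sub
    ((hσ _).hasDerivAt.comp_hasFDerivAt ξ (hasFDerivAt_sum_mul (M j) ξ))

theorem constraintJacobian_apply (hσ : Differentiable ℝ σ) (i j : Fin ν) :
    constraintJacobian ν ω σ e τ ξ M i j = (if j = i then 1 else 0) -
      if ω ≤ (j : ℕ) then deriv σ (∑ k, M j k * ξ k) * M j i else 0 := by
  by_cases hj : (j : ℕ) < ω
  · simp [constraintJacobian, (hasFDerivAt_G_of_lt e τ ξ M hj).fderiv, Pi.single_apply,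
      hj.not_ge]
  · simp [constraintJacobian, (hasFDerivAt_G_of_le e τ ξ M hσ (not_lt.1 hj)).fderiv,
      Pi.single_apply, not_lt.1 hj]

theorem constraintJacobian_mulVec_apply (hσ : Differentiable ℝ σ) (δ : Fin ν → ℝ)
    (i : Fin ν) :
    (constraintJacobian ν ω σ e τ ξ M *ᵥ δ) i = δ i -
      ∑ j ∈ Finset.univ.filter (fun j : Fin ν => ω ≤ (j : ℕ)),
        deriv σ (∑ k, M j k * ξ k) * M j i * δ j := by
  simp only [Matrix.mulVec, dotProduct, constraintJacobian_apply e τ ξ M hσ, sub_mul,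
    Finset.sum_sub_distrib, ite_mul, one_mul, zero_mul, Finset.sum_ite_eq', Finset.mem_univ,
    if_true, Finset.sum_filter]

theorem isUnit_constraintJacobian (hσ : Differentiable ℝ σ)
    (hM : ∀ i j : Fin ν, i ≤ j → M i j = 0) : IsUnit (constraintJacobian ν ω σ e τ ξ M) := by
  refine Matrix.isUnit_of_isUpperTriangular_of_diag_eq_one (fun i j (hji : j < i) => ?_)
    fun i => ?_
  · simp [constraintJacobian_apply e τ ξ M hσ, hM j i hji.le, hji.ne]
  · simp [constraintJacobian_apply e τ ξ M hσ, hM i i le_rfl]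

end Jacobian

theorem backward_recursion_general
    (ν ω : ℕ)
    (σ : ℝ → ℝ) (hσ : ContDiff ℝ 2 σ)
    (e : ℝ → Fin ω → ℝ)
    (τ : ℝ) (ξ : Fin ν → ℝ) (W : Fin ν → Fin ν → ℝ)
    (hW : ∀ i j : Fin ν, i ≤ j → W i j = 0)
    (v : Fin ν → ℝ) :
    let T : Matrix (Fin ν) (Fin ν) ℝ := Matrix.of fun i j =>
      fderiv ℝ (fun ξ' => G ν ω σ e τ ξ' W j) ξ (Pi.single i 1)
    (∃! δ : Fin ν → ℝ, T.mulVec δ = -v) ∧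
    (∀ δ : Fin ν → ℝ, T.mulVec δ = -v →
      (∀ i, δ i = -v i
          + ∑ j ∈ Finset.univ.filter (fun j : Fin ν => ω ≤ (j : ℕ)),
              deriv σ (∑ k, W j k * ξ k) * W j i * δ j) ∧
      (∀ i, v i = 0 →
        δ i = ∑ j ∈ Finset.univ.filter (fun j : Fin ν => ω ≤ (j : ℕ)),
              deriv σ (∑ k, W j k * ξ k) * W j i * δ j) ∧
      (∀ i, (∀ j, W j i = 0) → δ i = -v i)) := by
  intro T
  have hσ' : Differentiable ℝ σ := hσ.differentiable two_ne_zero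
  have hrec : ∀ δ : Fin ν → ℝ, T.mulVec δ = -v → ∀ i, δ i = -v i
      + ∑ j ∈ Finset.univ.filter (fun j : Fin ν => ω ≤ (j : ℕ)),
          deriv σ (∑ k, W j k * ξ k) * W j i * δ j := fun δ hδ i => by
    have hrow : (constraintJacobian ν ω σ e τ ξ W *ᵥ δ) i = (-v) i := congrFun hδ i
    rw [constraintJacobian_mulVec_apply e τ ξ W hσ' δ i, Pi.neg_apply] at hrow
    linarith
  refine ⟨Matrix.existsUnique_mulVec_eq (isUnit_constraintJacobian e τ ξ W hσ' hW) (-v),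
    fun δ hδ => ⟨hrec δ hδ, fun i hvi => ?_, fun i hWi => ?_⟩⟩
  · simpa [hvi] using hrec δ hδ i
  · simpa [hWi] using hrec δ hδ i

/-- with `T_{ij} := ∂G^j/∂ξ^i (τ, ξ, W)`, the system `T δ = −v`
has a unique solution, which satisfies the backward recursion
`δ_i = −v_i + Σ_{ω ≤ j < ν} σ'(Σ_k w_{jk} ξ^k) w_{ji} δ_j`; in particular
`δ_i = Σ_{ω ≤ j < ν} σ'(Σ_k w_{jk} ξ^k) w_{ji} δ_j` when `v_i = 0`, and
`δ_i = −v_i` for output units (those `i` with `w_{ji} = 0` for all `j`). -/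
theorem backward_recursion
    (ν ω : ℕ) (hω : 0 < ω) (hων : ω ≤ ν)
    (σ : ℝ → ℝ) (hσ : ContDiff ℝ 2 σ)
    (e : ℝ → Fin ω → ℝ) (he : ContDiffOn ℝ 1 e (Set.Ici 0))
    (τ : ℝ) (hτ : 0 ≤ τ) (ξ : Fin ν → ℝ) (W : Fin ν → Fin ν → ℝ)
    (hW : ∀ i j : Fin ν, i ≤ j → W i j = 0)
    (v : Fin ν → ℝ) :
    let T : Matrix (Fin ν) (Fin ν) ℝ := Matrix.of fun i j =>
      fderiv ℝ (fun ξ' => G ν ω σ e τ ξ' W j) ξ (Pi.single i 1)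
    (∃! δ : Fin ν → ℝ, T.mulVec δ = -v) ∧
    (∀ δ : Fin ν → ℝ, T.mulVec δ = -v →
      (∀ i, δ i = -v i
          + ∑ j ∈ Finset.univ.filter (fun j : Fin ν => ω ≤ (j : ℕ)),
              deriv σ (∑ k, W j k * ξ k) * W j i * δ j) ∧
      (∀ i, v i = 0 →
        δ i = ∑ j ∈ Finset.univ.filter (fun j : Fin ν => ω ≤ (j : ℕ)),
              deriv σ (∑ k, W j k * ξ k) * W j i * δ j) ∧
      (∀ i, (∀ j, W j i = 0) → δ i = -v i)) :=
  backward_recursion_general ν ω σ hσ e τ ξ W hW v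
end
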